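/- (Segre type [(11)22]) Let n = 3 with coordinates (u¹,u²,u³), let λ be a nonzero real constant, define the symmetric metric g by g₁₁ = 1, g₁₂ = −2λu³, g₁₃ = λu², g₂₂ = 4, g₂₃ = λu¹, g₃₃ = 0, and let U = {u ∈ ℝ³ : det g(u) > 0} (here det g = −λ²(u¹)² − 4λ²(u²)² − 4λ³u¹u²u³). Define c_{ijk} := (1/3)(∂_j g_{ik} − ∂_k g_{ij}) and the skew-symmetric field w by w₁₂ = 0, w₂₃ = λ²u¹/√(det g), w₃₁ = λ²u²/√(det g) (with w_{ji} = −w_{ij}, w_{ii} = 0). Then (g, c, w) satisfies conditions (cond1) on U. -/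

import Mathlib

open scoped BigOperators

/-- Partial derivative `∂_k f` in the `k`-th coordinate direction. -/
noncomputable def pd {n : ℕ} (k : Fin n) (f : (Fin n → ℝ) → ℝ) (u : Fin n → ℝ) : ℝ :=
  fderiv ℝ f u (Pi.single k 1)

/-- Conditions (cond1) for a triple `(g, c, w)` on a set `U ⊆ ℝⁿ`:
`g` is the (lower-index) metric `g_{ij}`, `c` are the lowered coefficients `c_{ijk}`,
`w` is the skew-symmetric 2-form `w_{ij}`, and `c^s_{jk} := g^{si} c_{ijk}` is computed
via the pointwise inverse matrix `(g u)⁻¹`. -/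
def Cond1 {n : ℕ} (U : Set (Fin n → ℝ))
    (g : (Fin n → ℝ) → Matrix (Fin n) (Fin n) ℝ)
    (c : (Fin n → ℝ) → Fin n → Fin n → Fin n → ℝ)
    (w : (Fin n → ℝ) → Matrix (Fin n) (Fin n) ℝ) : Prop :=
  ∀ u ∈ U,
    (∀ i j k, pd k (fun x => g x i j) u + c u i j k + c u j i k = 0) ∧
    (∀ i j k, c u i j k + c u i k j = 0) ∧
    (∀ i j k, pd k (fun x => g x i j) u + pd i (fun x => g x j k) u
        + pd j (fun x => g x k i) u = 0) ∧
    (∀ i j, w u i j + w u j i = 0) ∧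
    (∀ i j l, pd l (fun x => w x i j) u
        = ∑ s, (∑ a, (g u)⁻¹ s a * c u a i j) * w u s l) ∧
    (∀ m l p k, pd k (fun x => c x p m l) u
        + ∑ s, (∑ a, (g u)⁻¹ s a * c u a m l) * c u s p k + w u m l * w u p k = 0)

/-!
The metric is affine in `u`, so its first derivatives, and with them the coefficients `c_{ijk}`,
are constant: the only nonzero ones are `c₁₂₃ = c₂₁₃ = λ = -c₁₃₂ = -c₂₃₁`. Conditions (1)–(3)
are then identities between constants; for symmetric `g`, (1) is a third of (3). With
`D = det g`, the inverse metric is `adj g / D` and `w = A / √D` with `A` linear in `u`, so after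
clearing denominators (5) and (6) are polynomial identities: (6) needs only `D = (√D)²`, (5) also
the explicit formula for `D`.
-/

section PartialDerivative

variable {n : ℕ} {f h : (Fin n → ℝ) → ℝ} {u : Fin n → ℝ} (k : Fin n)

lemma HasFDerivAt.pd_eq {L : (Fin n → ℝ) →L[ℝ] ℝ} (hf : HasFDerivAt f L u) :
    pd k f u = L (Pi.single k 1) := by
  rw [pd, hf.fderiv]

@[simp]
lemma pd_const (a : ℝ) : pd k (fun _ => a) u = 0 := by
  simp [pd]

lemma pd_apply (i : Fin n) : pd k (fun x => x i) u = (Pi.single k 1 : Fin n → ℝ) i :=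
  (hasFDerivAt_apply i u).pd_eq k

lemma pd_const_mul (a : ℝ) : pd k (fun x => a * f x) u = a * pd k f u := by
  have : (fun x => a * f x) = a • f := rfl
  simp [pd, this, fderiv_const_smul_field]

lemma pd_neg : pd k (fun x => -f x) u = -pd k f u := by
  simp [pd]

lemma pd_sub (hf : DifferentiableAt ℝ f u) (hh : DifferentiableAt ℝ h u) :
    pd k (fun x => f x - h x) u = pd k f u - pd k h u := by
  simp [pd, fderiv_fun_sub hf hh]

lemma pd_mul (hf : DifferentiableAt ℝ f u) (hh : DifferentiableAt ℝ h u) :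
    pd k (fun x => f x * h x) u = pd k f u * h u + f u * pd k h u := by
  simp [pd, fderiv_fun_mul hf hh]
  ring

lemma pd_div_sqrt (hf : DifferentiableAt ℝ f u) (hh : DifferentiableAt ℝ h u) (hpos : 0 < h u) :
    pd k (fun x => f x / √(h x)) u
      = (pd k f u - f u * pd k h u / (2 * h u)) / √(h u) := by
  have hsu : √(h u) ≠ 0 := (Real.sqrt_pos.2 hpos).ne'
  have hinv : HasFDerivAt (fun x => (√(h x))⁻¹)
      ((-(1 / (2 * √(h u))) / √(h u) ^ 2) • fderiv ℝ h u) u :=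
    ((Real.hasDerivAt_sqrt hpos.ne').inv hsu).comp_hasFDerivAt u hh.hasFDerivAt
  simp only [div_eq_mul_inv]
  rw [(hf.hasFDerivAt.fun_mul hinv).pd_eq k, pd, pd]
  simp only [add_apply, smul_apply, smul_eq_mul, Real.sq_sqrt hpos.le]
  field_simp
  ring

end PartialDerivative

lemma pd_add_christoffel_add_christoffel {n : ℕ}
    {g : (Fin n → ℝ) → Matrix (Fin n) (Fin n) ℝ} (hg : ∀ x, (g x).IsSymm) (u : Fin n → ℝ) (i j k : Fin n) :
    pd k (fun x => g x i j) u
        + 1 / 3 * (pd j (fun x => g x i k) u - pd k (fun x => g x i j) u)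
        + 1 / 3 * (pd i (fun x => g x j k) u - pd k (fun x => g x j i) u)
      = 1 / 3 * (pd k (fun x => g x i j) u + pd i (fun x => g x j k) u
        + pd j (fun x => g x k i) u) := by
  simp only [(hg _).apply j i, (hg _).apply k i]
  ring

def segreMetric (l : ℝ) (u : Fin 3 → ℝ) : Matrix (Fin 3) (Fin 3) ℝ :=
  !![1, -(2 * l * u 2), l * u 1;
     -(2 * l * u 2), 4, l * u 0;
     l * u 1, l * u 0, 0]

noncomputable def segreForm (l : ℝ) (u : Fin 3 → ℝ) : Matrix (Fin 3) (Fin 3) ℝ :=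
  !![0, 0, -(l ^ 2 * u 1 / √(segreMetric l u).det);
     0, 0, l ^ 2 * u 0 / √(segreMetric l u).det;
     l ^ 2 * u 1 / √(segreMetric l u).det, -(l ^ 2 * u 0 / √(segreMetric l u).det), 0]

def segreConn (l : ℝ) : Fin 3 → Fin 3 → Fin 3 → ℝ :=
  ![![![0, 0, 0], ![0, 0, l], ![0, -l, 0]],
    ![![0, 0, l], ![0, 0, 0], ![-l, 0, 0]],
    0]

section Segre

variable (l : ℝ) (u : Fin 3 → ℝ)

lemma segreMetric_det : (segreMetric l u).det
    = -(l ^ 2 * u 0 ^ 2) - 4 * l ^ 2 * u 1 ^ 2 - 4 * l ^ 3 * u 0 * u 1 * u 2 := by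
  simp [segreMetric, Matrix.det_fin_three]
  ring

lemma segreMetric_isSymm : (segreMetric l u).IsSymm := by
  ext i j
  fin_cases i <;> fin_cases j <;> rfl

lemma pd_segreMetric (i j k : Fin 3) :
    pd k (fun x => segreMetric l x i j) u
      = segreMetric l (Pi.single k 1) i j - segreMetric l 0 i j := by
  fin_cases i <;> fin_cases j <;> simp [segreMetric, pd_neg, pd_const_mul, pd_apply]

lemma pd_segreMetric_cyclic (i j k : Fin 3) :
    pd k (fun x => segreMetric l x i j) u + pd i (fun x => segreMetric l x j k) u
      + pd j (fun x => segreMetric l x k i) u = 0 := by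
  simp only [pd_segreMetric]
  fin_cases i <;> fin_cases j <;> fin_cases k <;> simp [segreMetric] <;> ring

lemma christoffel_segreMetric (i j k : Fin 3) :
    1 / 3 * (pd j (fun x => segreMetric l x i k) u - pd k (fun x => segreMetric l x i j) u)
      = segreConn l i j k := by
  simp only [pd_segreMetric]
  fin_cases i <;> fin_cases j <;> fin_cases k <;> simp [segreMetric, segreConn] <;> ring

lemma adjugate_segreMetric : (segreMetric l u).adjugate
    = !![-(l ^ 2 * u 0 ^ 2), l ^ 2 * u 0 * u 1, -(2 * l ^ 2 * u 0 * u 2) - 4 * l * u 1;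
         l ^ 2 * u 0 * u 1, -(l ^ 2 * u 1 ^ 2), -(2 * l ^ 2 * u 1 * u 2) - l * u 0;
         -(2 * l ^ 2 * u 0 * u 2) - 4 * l * u 1, -(2 * l ^ 2 * u 1 * u 2) - l * u 0,
         4 - 4 * l ^ 2 * u 2 ^ 2] := by
  rw [segreMetric, Matrix.adjugate_fin_three_of]
  ext i j
  fin_cases i <;> fin_cases j <;> simp <;> ring

lemma pd_segreMetric_det (k : Fin 3) :
    pd k (fun x => (segreMetric l x).det) u
      = ![-(2 * l ^ 2 * u 0) - 4 * l ^ 3 * u 1 * u 2, -(8 * l ^ 2 * u 1) - 4 * l ^ 3 * u 0 * u 2,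
          -(4 * l ^ 3 * u 0 * u 1)] k := by
  simp (disch := fun_prop) only [segreMetric_det, pd_sub, pd_neg, pd_mul, pd_apply, pow_two,
    pd_const]
  fin_cases k <;> simp <;> ring

lemma differentiable_segreMetric_det : Differentiable ℝ fun x => (segreMetric l x).det := by
  simp only [segreMetric_det]
  fun_prop

lemma segreForm_skew (i j : Fin 3) : segreForm l u i j + segreForm l u j i = 0 := by
  fin_cases i <;> fin_cases j <;> simp [segreForm]

lemma pd_segreForm (hu : 0 < (segreMetric l u).det) (i j k : Fin 3) :
    pd k (fun x => segreForm l x i j) u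
      = ∑ s, (∑ a, (segreMetric l u)⁻¹ s a * segreConn l a i j) * segreForm l u s k := by
  have hpd : ∀ r, pd k (fun x => l ^ 2 * x r / √(segreMetric l x).det) u
      = (l ^ 2 * (Pi.single k 1 : Fin 3 → ℝ) r
          - l ^ 2 * u r * pd k (fun x => (segreMetric l x).det) u / (2 * (segreMetric l u).det))
        / √(segreMetric l u).det := fun r => by
    rw [pd_div_sqrt k (by fun_prop) (differentiable_segreMetric_det l u) hu, pd_const_mul,
      pd_apply]
  have hs : √(segreMetric l u).det ≠ 0 := (Real.sqrt_pos.2 hu).ne'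
  have hD := hu.ne'
  simp only [Matrix.inv_def, Ring.inverse_eq_inv', adjugate_segreMetric, Fin.sum_univ_three,
    Matrix.smul_apply, smul_eq_mul]
  -- `det g` stays abstract until the denominators are cleared: otherwise `simp` cancels its
  -- factor `l ^ 2` and leaves denominators that `field_simp` cannot see to be nonzero
  fin_cases i <;> fin_cases j <;>
    simp only [Fin.zero_eta, Fin.mk_one, Fin.reduceFinMk, segreForm, Matrix.of_apply,
      Matrix.cons_val, pd_neg, hpd, pd_const, pd_segreMetric_det] <;>
    generalize √(segreMetric l u).det = s at hs ⊢ <;>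
    generalize hP : (segreMetric l u).det = D at hD ⊢ <;>
    fin_cases k <;>
    simp [segreConn] <;>
    field_simp <;>
    (rw [segreMetric_det] at hP; subst hP; ring)

lemma contract_segreConn_add_segreForm_mul (hu : 0 < (segreMetric l u).det)
    (m i p k : Fin 3) :
    ∑ s, (∑ a, (segreMetric l u)⁻¹ s a * segreConn l a m i) * segreConn l s p k
      + segreForm l u m i * segreForm l u p k = 0 := by
  have hss := Real.mul_self_sqrt hu.le
  have hs : √(segreMetric l u).det ≠ 0 := (Real.sqrt_pos.2 hu).ne'
  simp only [Matrix.inv_def, Ring.inverse_eq_inv', adjugate_segreMetric, segreForm,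
    Fin.sum_univ_three, Matrix.smul_apply, smul_eq_mul]
  generalize √(segreMetric l u).det = s at hs hss ⊢
  generalize (segreMetric l u).det = D at hss ⊢
  -- with `D = s * s` both sides become polynomials in `u` and `s` once `s` is cleared
  subst hss
  fin_cases m <;> fin_cases i <;> fin_cases p <;> fin_cases k <;>
    simp [segreConn] <;> field_simp <;> ring

end Segre

theorem segre_1122_first_satisfies_cond1_general (l : ℝ)
    (g : (Fin 3 → ℝ) → Matrix (Fin 3) (Fin 3) ℝ)
    (hg : g = fun u => !![1, -(2 * l * u 2), l * u 1;
                          -(2 * l * u 2), 4, l * u 0;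
                          l * u 1, l * u 0, 0])
    (U : Set (Fin 3 → ℝ)) (hU : U = {u | 0 < (g u).det})
    (c : (Fin 3 → ℝ) → Fin 3 → Fin 3 → Fin 3 → ℝ)
    (hc : c = fun u i j k =>
      (1 / 3) * (pd j (fun x => g x i k) u - pd k (fun x => g x i j) u))
    (w : (Fin 3 → ℝ) → Matrix (Fin 3) (Fin 3) ℝ)
    (hw : w = fun u =>
      !![0, 0, -(l ^ 2 * u 1 / Real.sqrt (g u).det);
         0, 0, l ^ 2 * u 0 / Real.sqrt (g u).det;
         l ^ 2 * u 1 / Real.sqrt (g u).det, -(l ^ 2 * u 0 / Real.sqrt (g u).det), 0]) :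
    (∀ u : Fin 3 → ℝ, (g u).det
        = -(l ^ 2 * (u 0) ^ 2) - 4 * l ^ 2 * (u 1) ^ 2 - 4 * l ^ 3 * u 0 * u 1 * u 2) ∧
    Cond1 U g c w := by
  obtain rfl : g = segreMetric l := hg
  obtain rfl : w = segreForm l := hw
  subst hU hc
  refine ⟨segreMetric_det l, fun u hu => ⟨fun i j k => ?_, fun i j k => by ring,
    pd_segreMetric_cyclic l u, segreForm_skew l u, fun i j k => ?_, fun m i p k => ?_⟩⟩
  · rw [pd_add_christoffel_add_christoffel (segreMetric_isSymm l), pd_segreMetric_cyclic,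
      mul_zero]
  · simpa only [christoffel_segreMetric] using pd_segreForm l u hu i j k
  · simpa only [christoffel_segreMetric, pd_const, zero_add] using
      contract_segreConn_add_segreForm_mul l u hu m i p k

/-- Segre type [(11)22]. With `(u¹,u²,u³) = (u 0, u 1, u 2)`, `λ ≠ 0`,
metric `g = !![1, −2λu³, λu²; −2λu³, 4, λu¹; λu², λu¹, 0]`,
`U = {u : det g(u) > 0}` (where `det g = −λ²(u¹)² − 4λ²(u²)² − 4λ³u¹u²u³`),
`c_{ijk} = (1/3)(∂_j g_{ik} − ∂_k g_{ij})` and the skew form with `w₁₂ = 0`,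
`w₂₃ = λ²u¹/√(det g)`, `w₃₁ = λ²u²/√(det g)`, conditions (cond1) hold on `U`. -/
theorem segre_1122_first_satisfies_cond1 (l : ℝ) (hl : l ≠ 0)
    (g : (Fin 3 → ℝ) → Matrix (Fin 3) (Fin 3) ℝ)
    (hg : g = fun u => !![1, -(2 * l * u 2), l * u 1;
                          -(2 * l * u 2), 4, l * u 0;
                          l * u 1, l * u 0, 0])
    (U : Set (Fin 3 → ℝ)) (hU : U = {u | 0 < (g u).det})
    (c : (Fin 3 → ℝ) → Fin 3 → Fin 3 → Fin 3 → ℝ)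
    (hc : c = fun u i j k =>
      (1 / 3) * (pd j (fun x => g x i k) u - pd k (fun x => g x i j) u))
    (w : (Fin 3 → ℝ) → Matrix (Fin 3) (Fin 3) ℝ)
    (hw : w = fun u =>
      !![0, 0, -(l ^ 2 * u 1 / Real.sqrt (g u).det);
         0, 0, l ^ 2 * u 0 / Real.sqrt (g u).det;
         l ^ 2 * u 1 / Real.sqrt (g u).det, -(l ^ 2 * u 0 / Real.sqrt (g u).det), 0]) :
    (∀ u : Fin 3 → ℝ, (g u).det
        = -(l ^ 2 * (u 0) ^ 2) - 4 * l ^ 2 * (u 1) ^ 2 - 4 * l ^ 3 * u 0 * u 1 * u 2) ∧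
    Cond1 U g c w :=
  segre_1122_first_satisfies_cond1_general l g hg U hU c hc w hw
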